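/- Let 𝓐 be a finite central essential arrangement of hyperplanes in ℝ^d and X a flat (an intersection of some hyperplanes of 𝓐). For a chamber C adjacent to X (meaning closure(C) ∩ X has the same dimension as X), there is a unique chamber op_X(C) such that closure(op_X(C)) ∩ X = closure(C) ∩ X and S(C, op_X(C)) = 𝓐_X, where 𝓐_X = {H ∈ 𝓐 : X ⊆ H}. -/

import Mathlib

/-- The complement of a central arrangement `A` of (kernels of) linear forms on `ℝ^d`. -/
def arrComplement {d : ℕ} (A : Finset ((Fin d → ℝ) →ₗ[ℝ] ℝ)) : Set (Fin d → ℝ) :=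
  {x | ∀ f ∈ A, f x ≠ 0}

/-- `C` is a chamber of the central arrangement `A`. -/
def IsChamber {d : ℕ} (A : Finset ((Fin d → ℝ) →ₗ[ℝ] ℝ)) (C : Set (Fin d → ℝ)) : Prop :=
  ∃ x ∈ arrComplement A, C = connectedComponentIn (arrComplement A) x

/-- The hyperplane `ker f` separates `C` from `C'`. -/
def Separates {d : ℕ} (f : (Fin d → ℝ) →ₗ[ℝ] ℝ) (C C' : Set (Fin d → ℝ)) : Prop :=
  ((∀ x ∈ C, 0 < f x) ∧ (∀ x ∈ C', f x < 0)) ∨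
    ((∀ x ∈ C, f x < 0) ∧ (∀ x ∈ C', 0 < f x))

/-- The set `S(C,C')` of hyperplanes of `A` separating `C` and `C'`. -/
def sepSet {d : ℕ} (A : Finset ((Fin d → ℝ) →ₗ[ℝ] ℝ)) (C C' : Set (Fin d → ℝ)) :
    Set ((Fin d → ℝ) →ₗ[ℝ] ℝ) :=
  {f | f ∈ A ∧ Separates f C C'}

/-!
A chamber is a sign cell `{x | ∀ f ∈ A, 0 < f x₀ * f x}` and its closure is the closed cell
`{x | ∀ f ∈ A, 0 ≤ f x₀ * f x}`, so a chamber is determined by the walls separating it from a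
fixed chamber `C`; this gives uniqueness. For existence, adjacency says that the convex set
`closure C ∩ X` spans `X`, so it contains a point `y` at which every `f ∈ A` not vanishing on `X`
is nonzero. Moving from `y` a little further away from a point `x₀ ∈ C`, to
`y + t • (y - x₀)`, flips exactly the signs of the forms vanishing on `X`; the chamber of that
point is `op_X(C)`.
-/

open Filter Topology Set

lemma mul_nonneg_iff_of_mul_pos {a b c : ℝ} (hab : 0 < a * b) : 0 ≤ a * c ↔ 0 ≤ b * c := by
  constructor <;> intro h <;> nlinarith [mul_nonneg h hab.le, mul_self_nonneg a, mul_self_nonneg b]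

lemma mul_pos_of_mul_neg_iff {a b c : ℝ} (ha : a ≠ 0) (hb : b ≠ 0) (hc : c ≠ 0)
    (h : a * b < 0 ↔ a * c < 0) : 0 < b * c := by
  by_contra hbc
  have hbc' : b * c < 0 := (not_lt.1 hbc).lt_of_ne (mul_ne_zero hb hc)
  have : a * b * (a * c) < 0 := by nlinarith [mul_self_pos.2 ha]
  rcases mul_neg_iff.1 this with ⟨hab, hac⟩ | ⟨hab, hac⟩
  · exact hab.not_gt (h.2 hac)
  · exact hac.not_gt (h.1 hab)

section LinearFunctionals

variable {V : Type*} [AddCommGroup V] [Module ℝ V]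

lemma LinearMap.subsingleton_setOf_apply_add_smul_sub_eq_zero (f : V →ₗ[ℝ] ℝ) {y z : V}
    (h : f y ≠ 0 ∨ f z ≠ 0) : {t : ℝ | f (y + t • (z - y)) = 0}.Subsingleton := by
  intro t₁ h₁ t₂ h₂
  simp only [mem_ofPred_eq, map_add, map_smul, map_sub, smul_eq_mul] at h₁ h₂
  by_contra hne
  have hzy : f z - f y = 0 := (mul_eq_zero.1 (show (t₁ - t₂) * (f z - f y) = 0 by
    linear_combination h₁ - h₂)).resolve_left (sub_ne_zero.2 hne)
  rw [hzy, mul_zero, add_zero] at h₁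
  exact h.elim (· h₁) (· (by linarith))

theorem Convex.exists_forall_apply_ne_zero {K : Set V} (hK : Convex ℝ K) (hne : K.Nonempty)
    (F : Finset (V →ₗ[ℝ] ℝ)) (h : ∀ f ∈ F, ∃ y ∈ K, f y ≠ 0) : ∃ y ∈ K, ∀ f ∈ F, f y ≠ 0 := by
  classical
  induction F using Finset.induction_on with
  | empty => exact ⟨hne.some, hne.some_mem, by simp⟩
  | insert g F _ ih =>
    obtain ⟨y, hyK, hy⟩ := ih fun f hf => h f (Finset.mem_insert_of_mem hf)
    obtain ⟨z, hzK, hz⟩ := h g (Finset.mem_insert_self g F)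
    have hbad : (⋃ f ∈ insert g F, {t : ℝ | f (y + t • (z - y)) = 0}).Finite := by
      refine (insert g F).finite_toSet.biUnion fun f hf => ?_
      refine (f.subsingleton_setOf_apply_add_smul_sub_eq_zero ?_).finite
      rcases Finset.mem_insert.1 hf with rfl | hf
      exacts [Or.inr hz, Or.inl (hy f hf)]
    obtain ⟨t, ht, htbad⟩ := ((Icc_infinite (zero_lt_one' ℝ)).sdiff hbad).nonempty
    exact ⟨y + t • (z - y), hK.add_smul_sub_mem hyK hzK ht,
      fun f hf hf0 => htbad (mem_biUnion hf hf0)⟩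

lemma LinearMap.eventually_mul_apply_add_smul_sub (f : V →ₗ[ℝ] ℝ) {x₀ y : V} (hx₀ : f x₀ ≠ 0)
    (hy : 0 ≤ f x₀ * f y) : ∀ᶠ t in 𝓝[>] (0 : ℝ),
      (f y = 0 → f x₀ * f (y + t • (y - x₀)) < 0) ∧
        (f y ≠ 0 → 0 < f x₀ * f (y + t • (y - x₀))) := by
  simp only [map_add, map_smul, smul_eq_mul]
  by_cases hfy : f y = 0
  · filter_upwards [self_mem_nhdsWithin] with t (ht : 0 < t)
    refine ⟨fun _ => ?_, fun h => (h hfy).elim⟩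
    rw [map_sub, hfy]
    nlinarith [mul_self_pos.2 hx₀]
  · have hpos : 0 < f x₀ * f y := hy.lt_of_ne (mul_ne_zero hx₀ hfy).symm
    have hlim : Tendsto (fun t : ℝ => f x₀ * (f y + t * f (y - x₀))) (𝓝 0) (𝓝 (f x₀ * f y)) :=
      (by fun_prop : Continuous fun t : ℝ => f x₀ * (f y + t * f (y - x₀))).tendsto' 0 _
        (by simp)
    filter_upwards [nhdsWithin_le_nhds (hlim.eventually (eventually_gt_nhds hpos))] with t ht
    exact ⟨fun h => (hfy h).elim, fun _ => ht⟩

theorem exists_forall_mul_apply_neg_and_pos (A : Finset (V →ₗ[ℝ] ℝ)) {x₀ y : V}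
    (hx₀ : ∀ f ∈ A, f x₀ ≠ 0) (hy : ∀ f ∈ A, 0 ≤ f x₀ * f y) :
    ∃ z, ∀ f ∈ A, (f y = 0 → f x₀ * f z < 0) ∧ (f y ≠ 0 → 0 < f x₀ * f z) :=
  let ⟨_, ht⟩ := ((eventually_all_finset A).2 fun f hf =>
    f.eventually_mul_apply_add_smul_sub (hx₀ f hf) (hy f hf)).exists
  ⟨_, ht⟩

end LinearFunctionals

section Chambers

variable {d : ℕ} {A : Finset ((Fin d → ℝ) →ₗ[ℝ] ℝ)} {x₀ z : Fin d → ℝ}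

lemma convex_setOf_mul_pos (A : Finset ((Fin d → ℝ) →ₗ[ℝ] ℝ)) (x₀ : Fin d → ℝ) :
    Convex ℝ {x : Fin d → ℝ | ∀ f ∈ A, 0 < f x₀ * f x} := by
  simp only [ofPred_forall]
  exact convex_iInter₂ fun f _ => convex_halfSpace_gt (f x₀ • f).isLinear 0

lemma connectedComponentIn_arrComplement (hx₀ : x₀ ∈ arrComplement A) :
    connectedComponentIn (arrComplement A) x₀ = {x | ∀ f ∈ A, 0 < f x₀ * f x} := by
  refine Subset.antisymm (fun x hx f hf => ?_) ?_
  · have hcont : Continuous fun x => f x₀ * f x :=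
      continuous_const.mul f.continuous_of_finiteDimensional
    refine isPreconnected_connectedComponentIn.subset_left_of_subset_union
      (v := {x | f x₀ * f x < 0})
      (isOpen_lt continuous_const hcont) (isOpen_lt hcont continuous_const)
      (disjoint_left.2 fun _ h h' => lt_asymm (mem_ofPred.1 h) h') (fun y hy => ?_)
      ⟨x₀, mem_connectedComponentIn hx₀, mul_self_pos.2 (hx₀ f hf)⟩ hx
    exact (mul_ne_zero (hx₀ f hf) (connectedComponentIn_subset _ _ hy f hf)).symm.lt_or_gt
  · refine (convex_setOf_mul_pos A x₀).isPreconnected.subset_connectedComponentIn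
      (fun f hf => mul_self_pos.2 (hx₀ f hf)) fun x hx f hf h0 => ?_
    simpa [h0] using hx f hf

lemma closure_connectedComponentIn_arrComplement (hx₀ : x₀ ∈ arrComplement A) :
    closure (connectedComponentIn (arrComplement A) x₀) = {x | ∀ f ∈ A, 0 ≤ f x₀ * f x} := by
  rw [connectedComponentIn_arrComplement hx₀]
  refine Subset.antisymm (closure_minimal (fun x hx f hf => (hx f hf).le) ?_) fun w hw => ?_
  · simp only [ofPred_forall]
    exact isClosed_biInter fun f _ =>
      isClosed_le continuous_const (continuous_const.mul f.continuous_of_finiteDimensional)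
  · refine closure_mono ?_ (segment_subset_closure_openSegment (right_mem_segment ℝ x₀ w))
    rintro _ ⟨a, b, ha, hb, -, rfl⟩ f hf
    have := hw f hf
    simp only [map_add, map_smul, smul_eq_mul]
    nlinarith [mul_self_pos.2 (hx₀ f hf), mul_nonneg hb.le this]

lemma separates_connectedComponentIn_iff {f : (Fin d → ℝ) →ₗ[ℝ] ℝ} (hf : f ∈ A)
    (hx₀ : x₀ ∈ arrComplement A) (hz : z ∈ arrComplement A) :
    Separates f (connectedComponentIn (arrComplement A) x₀)
      (connectedComponentIn (arrComplement A) z) ↔ f x₀ * f z < 0 := by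
  constructor
  · rintro (⟨h₁, h₂⟩ | ⟨h₁, h₂⟩)
    · exact mul_neg_of_pos_of_neg (h₁ x₀ (mem_connectedComponentIn hx₀))
        (h₂ z (mem_connectedComponentIn hz))
    · exact mul_neg_of_neg_of_pos (h₁ x₀ (mem_connectedComponentIn hx₀))
        (h₂ z (mem_connectedComponentIn hz))
  · intro h
    simp only [Separates, connectedComponentIn_arrComplement hx₀,
      connectedComponentIn_arrComplement hz, mem_ofPred_eq]
    rcases mul_neg_iff.1 h with ⟨hx, hz⟩ | ⟨hx, hz⟩
    · exact Or.inl ⟨fun x hx' => (pos_iff_pos_of_mul_pos (hx' f hf)).1 hx,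
        fun x hx' => (neg_iff_neg_of_mul_pos (hx' f hf)).1 hz⟩
    · exact Or.inr ⟨fun x hx' => (neg_iff_neg_of_mul_pos (hx' f hf)).1 hx,
        fun x hx' => (pos_iff_pos_of_mul_pos (hx' f hf)).1 hz⟩

lemma sepSet_connectedComponentIn (hx₀ : x₀ ∈ arrComplement A) (hz : z ∈ arrComplement A) :
    sepSet A (connectedComponentIn (arrComplement A) x₀)
      (connectedComponentIn (arrComplement A) z) = {f | f ∈ A ∧ f x₀ * f z < 0} := by
  ext f
  exact and_congr_right fun hf => separates_connectedComponentIn_iff hf hx₀ hz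

theorem IsChamber.eq_of_sepSet_eq {C D D' : Set (Fin d → ℝ)} (hC : IsChamber A C)
    (hD : IsChamber A D) (hD' : IsChamber A D') (h : sepSet A C D = sepSet A C D') :
    D = D' := by
  obtain ⟨x₀, hx₀, rfl⟩ := hC
  obtain ⟨z, hz, rfl⟩ := hD
  obtain ⟨z', hz', rfl⟩ := hD'
  rw [sepSet_connectedComponentIn hx₀ hz, sepSet_connectedComponentIn hx₀ hz'] at h
  refine connectedComponentIn_eq ?_
  rw [connectedComponentIn_arrComplement hz]
  exact fun f hf => mul_pos_of_mul_neg_iff (hx₀ f hf) (hz f hf) (hz' f hf)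
    (and_congr_right_iff.1 (Set.ext_iff.1 h f) hf)

lemma closure_connectedComponentIn_inter_eq (hx₀ : x₀ ∈ arrComplement A)
    (hz : z ∈ arrComplement A) {X : Submodule ℝ (Fin d → ℝ)}
    (h : ∀ f ∈ A, ¬ X ≤ LinearMap.ker f → 0 < f x₀ * f z) :
    closure (connectedComponentIn (arrComplement A) z) ∩ X =
      closure (connectedComponentIn (arrComplement A) x₀) ∩ X := by
  ext x
  simp only [mem_inter_iff, closure_connectedComponentIn_arrComplement hx₀,
    closure_connectedComponentIn_arrComplement hz, mem_ofPred_eq, SetLike.mem_coe]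
  refine and_congr_left fun hxX => forall₂_congr fun f hf => ?_
  by_cases hXf : X ≤ LinearMap.ker f
  · simp [LinearMap.mem_ker.1 (hXf hxX)]
  · exact (mul_nonneg_iff_of_mul_pos (h f hf hXf)).symm

lemma exists_mem_closure_inter_forall_ne_zero (hx₀ : x₀ ∈ arrComplement A)
    {X : Submodule ℝ (Fin d → ℝ)}
    (hadj : Module.finrank ℝ (Submodule.span ℝ
      (closure (connectedComponentIn (arrComplement A) x₀) ∩ (X : Set (Fin d → ℝ))))
      = Module.finrank ℝ X) :
    ∃ y ∈ closure (connectedComponentIn (arrComplement A) x₀) ∩ (X : Set (Fin d → ℝ)),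
      ∀ f ∈ A, ¬ X ≤ LinearMap.ker f → f y ≠ 0 := by
  classical
  set K := closure (connectedComponentIn (arrComplement A) x₀) ∩ (X : Set (Fin d → ℝ))
  have hspan : Submodule.span ℝ K = X :=
    Submodule.eq_of_le_of_finrank_le (Submodule.span_le.2 inter_subset_right) hadj.ge
  have hK : Convex ℝ K := by
    refine Convex.inter ?_ X.convex
    exact (connectedComponentIn_arrComplement hx₀ ▸ convex_setOf_mul_pos A x₀).closure
  have hK₀ : (0 : Fin d → ℝ) ∈ K := by
    refine ⟨?_, X.zero_mem⟩
    rw [closure_connectedComponentIn_arrComplement hx₀]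
    simp
  obtain ⟨y, hyK, hy⟩ := hK.exists_forall_apply_ne_zero ⟨0, hK₀⟩
    {f ∈ A | ¬ X ≤ LinearMap.ker f} fun f hf => by
      by_contra! h
      rw [Finset.mem_filter, ← hspan, Submodule.span_le] at hf
      exact hf.2 h
  exact ⟨y, hyK, fun f hf hXf => hy f (Finset.mem_filter.2 ⟨hf, hXf⟩)⟩

end Chambers

theorem exists_unique_opposite_chamber_general {d : ℕ} (A : Finset ((Fin d → ℝ) →ₗ[ℝ] ℝ))
    (X : Submodule ℝ (Fin d → ℝ))
    (C : Set (Fin d → ℝ)) (hC : IsChamber A C)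
    (hadj : Module.finrank ℝ (Submodule.span ℝ (closure C ∩ (X : Set (Fin d → ℝ))))
      = Module.finrank ℝ X) :
    ∃! D : Set (Fin d → ℝ), IsChamber A D ∧
      closure D ∩ (X : Set (Fin d → ℝ)) = closure C ∩ (X : Set (Fin d → ℝ)) ∧
      sepSet A C D = {f | f ∈ A ∧ X ≤ LinearMap.ker f} := by
  obtain ⟨x₀, hx₀, rfl⟩ := hC
  obtain ⟨y, ⟨hyC, hyX⟩, hy⟩ := exists_mem_closure_inter_forall_ne_zero hx₀ hadj
  rw [closure_connectedComponentIn_arrComplement hx₀] at hyC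
  obtain ⟨z, hz⟩ := exists_forall_mul_apply_neg_and_pos A hx₀ hyC
  have hker : ∀ f ∈ A, X ≤ LinearMap.ker f ↔ f y = 0 :=
    fun f hf => ⟨fun h => h hyX, not_imp_not.1 (hy f hf)⟩
  have hzA : z ∈ arrComplement A := fun f hf hfz => by
    by_cases hfy : f y = 0
    · simpa [hfz] using (hz f hf).1 hfy
    · simpa [hfz] using (hz f hf).2 hfy
  have hsep : sepSet A (connectedComponentIn (arrComplement A) x₀)
      (connectedComponentIn (arrComplement A) z) = {f | f ∈ A ∧ X ≤ LinearMap.ker f} := by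
    rw [sepSet_connectedComponentIn hx₀ hzA]
    refine Set.ext fun f => and_congr_right fun hf => ?_
    rw [hker f hf]
    exact ⟨fun h => by_contra fun hfy => ((hz f hf).2 hfy).not_gt h, (hz f hf).1⟩
  refine ⟨_, ⟨⟨z, hzA, rfl⟩, ?_, hsep⟩, fun D ⟨hD, _, hsepD⟩ => ?_⟩
  · exact closure_connectedComponentIn_inter_eq hx₀ hzA fun f hf hXf => (hz f hf).2 (hy f hf hXf)
  · exact (IsChamber.eq_of_sepSet_eq ⟨x₀, hx₀, rfl⟩ ⟨z, hzA, rfl⟩ hD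
      (hsep.trans hsepD.symm)).symm

/-- For a central essential arrangement `A`, a flat `X` (intersection of kernels of a
subset `s ⊆ A`), and a chamber `C` adjacent to `X` (the span of `closure C ∩ X` has
the dimension of `X`), there is a unique chamber `D = op_X(C)` with
`closure D ∩ X = closure C ∩ X` and `S(C,D) = A_X = {H ∈ A : X ⊆ H}`. -/
theorem exists_unique_opposite_chamber {d : ℕ} (A : Finset ((Fin d → ℝ) →ₗ[ℝ] ℝ))
    (hA : ∀ f ∈ A, f ≠ 0) (hess : (⨅ f ∈ A, LinearMap.ker f) = ⊥)
    (s : Finset ((Fin d → ℝ) →ₗ[ℝ] ℝ)) (hs : s ⊆ A)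
    (X : Submodule ℝ (Fin d → ℝ)) (hX : X = ⨅ f ∈ s, LinearMap.ker f)
    (C : Set (Fin d → ℝ)) (hC : IsChamber A C)
    (hadj : Module.finrank ℝ (Submodule.span ℝ (closure C ∩ (X : Set (Fin d → ℝ))))
      = Module.finrank ℝ X) :
    ∃! D : Set (Fin d → ℝ), IsChamber A D ∧
      closure D ∩ (X : Set (Fin d → ℝ)) = closure C ∩ (X : Set (Fin d → ℝ)) ∧
      sepSet A C D = {f | f ∈ A ∧ X ≤ LinearMap.ker f} :=
  exists_unique_opposite_chamber_general A X C hC hadj
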